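/- Let M, K be positive integers, R̂ ∈ ℂ^{M×M} Hermitian, and Ĉ_1, …, Ĉ_K ∈ ℂ^{M×M} Hermitian positive semidefinite matrices such that R̂ − Σ_{k=1}^K Ĉ_k is positive semidefinite. Let h_1, …, h_K ∈ ℂ^M satisfy h_kᴴ Ĉ_k h_k > 0 for each k, and define c̃_k = Ĉ_k h_k / √(h_kᴴ Ĉ_k h_k) and C̃_k = c̃_k c̃_kᴴ. Then R̂ − Σ_{k=1}^K C̃_k is positive semidefinite. -/

import Mathlib

/-!
With `α = hᴴ C h`, Cauchy–Schwarz for the semi-inner product `⟪x, y⟫ = xᴴ C y` of a positive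
semidefinite `C` gives `|xᴴ C h|² ≤ (xᴴ C x) α`, i.e. `xᴴ c̃ c̃ᴴ x ≤ xᴴ C x` for
`c̃ = C h / √α`. So each `C_k - c̃_k c̃_kᴴ` is positive semidefinite, and
`R - ∑ c̃_k c̃_kᴴ = (R - ∑ C_k) + ∑ (C_k - c̃_k c̃_kᴴ)` is a sum of positive semidefinite matrices.
-/

open Matrix ComplexOrder

namespace Matrix

variable {n 𝕜 : Type*} [Fintype n] [RCLike 𝕜]

theorem PosSemidef.norm_dotProduct_mulVec_sq_le {C : Matrix n n 𝕜} (hC : C.PosSemidef)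
    (x y : n → 𝕜) :
    ‖star x ⬝ᵥ C *ᵥ y‖ ^ 2 ≤
      RCLike.re (star x ⬝ᵥ C *ᵥ x) * RCLike.re (star y ⬝ᵥ C *ᵥ y) := by
  let := C.toSeminormedAddCommGroup hC
  let := C.toInnerProductSpace hC
  have hinner (u v : n → 𝕜) : inner 𝕜 u v = star u ⬝ᵥ C *ᵥ v := dotProduct_comm _ _
  have hCS := inner_mul_inner_self_le (𝕜 := 𝕜) x y
  rwa [norm_inner_symm y x, ← sq, hinner, hinner, hinner] at hCS

theorem star_dotProduct_vecMulVec_self_star_mulVec (c x : n → 𝕜) :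
    star x ⬝ᵥ vecMulVec c (star c) *ᵥ x = (‖star x ⬝ᵥ c‖ ^ 2 : ℝ) := by
  rw [vecMulVec_mulVec, dotProduct_smul, star_dotProduct c x, MulOpposite.smul_eq_mul_unop,
    MulOpposite.unop_op, RCLike.star_def, RCLike.mul_conj, RCLike.ofReal_pow]

theorem posSemidef_sub_vecMulVec_self_star {C : Matrix n n 𝕜} (hC : C.IsHermitian) (c : n → 𝕜)
    (hc : ∀ x, ‖star x ⬝ᵥ c‖ ^ 2 ≤ RCLike.re (star x ⬝ᵥ C *ᵥ x)) :
    (C - vecMulVec c (star c)).PosSemidef := by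
  refine .of_dotProduct_mulVec_nonneg (hC.sub (posSemidef_vecMulVec_self_star c).isHermitian)
    fun x => ?_
  rw [sub_mulVec, dotProduct_sub, star_dotProduct_vecMulVec_self_star_mulVec, RCLike.nonneg_iff]
  simp [hC.im_star_dotProduct_mulVec_self, hc x]

/-- No positivity of `hᴴ C h` is needed: if it vanishes, the vector is `0⁻¹ • C h = 0`. -/
theorem PosSemidef.posSemidef_sub_vecMulVec_inv_sqrt_smul_mulVec {C : Matrix n n 𝕜}
    (hC : C.PosSemidef) (h : n → 𝕜) :
    (C - vecMulVec ((√(RCLike.re (star h ⬝ᵥ C *ᵥ h)) : 𝕜)⁻¹ • C *ᵥ h)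
      (star ((√(RCLike.re (star h ⬝ᵥ C *ᵥ h)) : 𝕜)⁻¹ • C *ᵥ h))).PosSemidef := by
  refine posSemidef_sub_vecMulVec_self_star hC.isHermitian _ fun x => ?_
  set α := RCLike.re (star h ⬝ᵥ C *ᵥ h)
  have hα : 0 ≤ α := hC.re_dotProduct_nonneg h
  have hCS := hC.norm_dotProduct_mulVec_sq_le x h
  rw [dotProduct_smul, smul_eq_mul, norm_mul, mul_pow, norm_inv, RCLike.norm_ofReal,
    abs_of_nonneg (Real.sqrt_nonneg α), inv_pow, Real.sq_sqrt hα]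
  exact inv_mul_le_of_le_mul₀ hα (hC.re_dotProduct_nonneg x) (by rwa [mul_comm])

end Matrix

theorem recovered_solution_feasible_general
    (M K : ℕ)
    (R : Matrix (Fin M) (Fin M) ℂ)
    (C : Fin K → Matrix (Fin M) (Fin M) ℂ) (hC : ∀ k, (C k).PosSemidef)
    (hRC : (R - ∑ k, C k).PosSemidef)
    (h : Fin K → Fin M → ℂ)
    (c : Fin K → Fin M → ℂ)
    (hc : ∀ k, c k = ((Real.sqrt ((star (h k) ⬝ᵥ (C k).mulVec (h k)).re) : ℂ))⁻¹ •
        (C k).mulVec (h k)) :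
    (R - ∑ k, vecMulVec (c k) (star (c k))).PosSemidef := by
  have hdeflate (k : Fin K) : (C k - vecMulVec (c k) (star (c k))).PosSemidef := by
    rw [hc k]
    exact (hC k).posSemidef_sub_vecMulVec_inv_sqrt_smul_mulVec (h k)
  have hsplit : R - ∑ k, vecMulVec (c k) (star (c k)) =
      (R - ∑ k, C k) + ∑ k, (C k - vecMulVec (c k) (star (c k))) := by
    rw [Finset.sum_sub_distrib]
    abel
  rw [hsplit]
  exact hRC.add (posSemidef_sum _ fun k _ => hdeflate k)

/-- Feasibility of the recovered rank-one solution: if `R̂ − Σ_k Ĉ_k ⪰ 0` and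
`c̃_k = Ĉ_k h_k / √(h_kᴴ Ĉ_k h_k)`, then `R̂ − Σ_k c̃_k c̃_kᴴ ⪰ 0`. -/
theorem recovered_solution_feasible
    (M K : ℕ) (hM : 0 < M) (hK : 0 < K)
    (R : Matrix (Fin M) (Fin M) ℂ) (hR : R.IsHermitian)
    (C : Fin K → Matrix (Fin M) (Fin M) ℂ) (hC : ∀ k, (C k).PosSemidef)
    (hRC : (R - ∑ k, C k).PosSemidef)
    (h : Fin K → Fin M → ℂ)
    (hpos : ∀ k, 0 < (star (h k) ⬝ᵥ (C k).mulVec (h k)).re)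
    (c : Fin K → Fin M → ℂ)
    (hc : ∀ k, c k = ((Real.sqrt ((star (h k) ⬝ᵥ (C k).mulVec (h k)).re) : ℂ))⁻¹ •
        (C k).mulVec (h k)) :
    (R - ∑ k, vecMulVec (c k) (star (c k))).PosSemidef :=
  recovered_solution_feasible_general M K R C hC hRC h c hc
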